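/- arXiv:1702.08044 — 4 statements merged into one kernel-verified Lean document; each statement's English description precedes it below -/
import Mathlib

section
/- For a random tuple (A_1, ..., A_L) of finitely valued random variables and any i in {1,...,L}, the average over all size-i subsets J of {1,...,L} of H(A_J)/i is at least H(A_1,...,A_L)/L (generalized Han inequality). -/
open Finset

/-- The probability that random variable `X` takes value `a`, under pmf `μ`. -/
noncomputable def probOf {Ω : Type*} [Fintype Ω] (μ : Ω → ℝ) {α : Type*} [Fintype α]
    [DecidableEq α] (X : Ω → α) (a : α) : ℝ :=
  ∑ ω ∈ univ.filter (fun ω => X ω = a), μ ω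

/-- Shannon entropy of a finitely valued random variable `X` under pmf `μ`. -/
noncomputable def shannonH {Ω : Type*} [Fintype Ω] (μ : Ω → ℝ) {α : Type*} [Fintype α]
    [DecidableEq α] (X : Ω → α) : ℝ :=
  ∑ a : α, Real.negMulLog (probOf μ X a)

section Basic
variable {Ω : Type*} [Fintype Ω] (μ : Ω → ℝ)

lemma probOf_nonneg (hμ0 : ∀ ω, 0 ≤ μ ω) {α : Type*} [Fintype α] [DecidableEq α]
    (X : Ω → α) (a : α) : 0 ≤ probOf μ X a :=
  Finset.sum_nonneg fun ω _ => hμ0 ω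

lemma shannonH_of_isEmpty [IsEmpty Ω] {α : Type*} [Fintype α] [DecidableEq α] (X : Ω → α) :
    shannonH μ X = 0 := by
  simp [shannonH, probOf, Finset.univ_eq_empty]

lemma shannonH_congr {α β : Type*} [Fintype α] [DecidableEq α] [Fintype β] [DecidableEq β]
    (X : Ω → α) (Y : Ω → β) (u : α → β) (v : β → α)
    (hu : ∀ ω, Y ω = u (X ω)) (hv : ∀ ω, X ω = v (Y ω)) :
    shannonH μ X = shannonH μ Y := by
  classical
  have hX0 : ∀ a ∉ univ.image X, probOf μ X a = 0 := by
    intro a ha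
    have : univ.filter (fun ω => X ω = a) = ∅ := by
      refine Finset.filter_false_of_mem fun ω _ => fun h => ha ?_
      exact Finset.mem_image.mpr ⟨ω, Finset.mem_univ ω, h⟩
    simp [probOf, this]
  have hY0 : ∀ b ∉ univ.image Y, probOf μ Y b = 0 := by
    intro b hb
    have : univ.filter (fun ω => Y ω = b) = ∅ := by
      refine Finset.filter_false_of_mem fun ω _ => fun h => hb ?_
      exact Finset.mem_image.mpr ⟨ω, Finset.mem_univ ω, h⟩
    simp [probOf, this]
  have key : ∀ ω : Ω, probOf μ Y (u (X ω)) = probOf μ X (X ω) := by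
    intro ω
    unfold probOf
    congr 1
    ext ω'
    simp only [Finset.mem_filter, Finset.mem_univ, true_and]
    constructor
    · intro h
      rw [hv ω', h, ← hu ω, ← hv ω]
    · intro h
      rw [hu ω', h]
  rw [shannonH, shannonH,
    ← Finset.sum_subset (Finset.subset_univ (univ.image X))
      (fun a _ ha => by rw [hX0 a ha, Real.negMulLog_zero]),
    ← Finset.sum_subset (Finset.subset_univ (univ.image Y))
      (fun b _ hb => by rw [hY0 b hb, Real.negMulLog_zero])]
  refine Finset.sum_nbij' u v ?_ ?_ ?_ ?_ ?_
  · rintro a ha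
    obtain ⟨ω, -, rfl⟩ := Finset.mem_image.mp ha
    exact Finset.mem_image.mpr ⟨ω, Finset.mem_univ ω, hu ω⟩
  · rintro b hb
    obtain ⟨ω, -, rfl⟩ := Finset.mem_image.mp hb
    exact Finset.mem_image.mpr ⟨ω, Finset.mem_univ ω, hv ω⟩
  · rintro a ha
    obtain ⟨ω, -, rfl⟩ := Finset.mem_image.mp ha
    rw [← hu ω, ← hv ω]
  · rintro b hb
    obtain ⟨ω, -, rfl⟩ := Finset.mem_image.mp hb
    rw [← hv ω, ← hu ω]
  · rintro a ha
    obtain ⟨ω, -, rfl⟩ := Finset.mem_image.mp ha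
    rw [key ω]

lemma shannonH_comp_inj {α β : Type*} [Fintype α] [DecidableEq α] [Fintype β] [DecidableEq β]
    (X : Ω → α) (e : α → β) (he : Function.Injective e) :
    shannonH μ (fun ω => e (X ω)) = shannonH μ X := by
  by_cases hΩ : Nonempty Ω
  · have hα : Nonempty α := ⟨X (Classical.arbitrary Ω)⟩
    exact (shannonH_congr μ X (fun ω => e (X ω)) e (Function.invFun e)
      (fun ω => rfl)
      (fun ω => (Function.leftInverse_invFun he (X ω)).symm)).symm
  · have : IsEmpty Ω := not_nonempty_iff.mp hΩ
    rw [shannonH_of_isEmpty, shannonH_of_isEmpty]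

lemma shannonH_const (hμ1 : ∑ ω, μ ω = 1) {α : Type*} [Fintype α] [DecidableEq α] (c : α) :
    shannonH μ (fun _ => c) = 0 := by
  have hp : ∀ a, probOf μ (fun _ : Ω => c) a = if c = a then 1 else 0 := by
    intro a
    rw [probOf]
    split_ifs with h
    · subst h; simp [Finset.filter_true_of_mem, hμ1]
    · rw [Finset.filter_false_of_mem fun ω _ => h, Finset.sum_empty]
  simp only [shannonH, hp, apply_ite Real.negMulLog, Real.negMulLog_zero]
  simp

end Basic

lemma sum_neg_mul_const {ι : Type*} (s : Finset ι) (f : ι → ℝ) (c : ℝ) :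
    ∑ i ∈ s, -(f i * c) = -((∑ i ∈ s, f i) * c) := by
  rw [Finset.sum_neg_distrib, Finset.sum_mul]

lemma log_ratio_bound {p q : ℝ} (hp : 0 < p) (hq : 0 < q) :
    p * (Real.log q - Real.log p) ≤ q - p := by
  rw [← Real.log_div hq.ne' hp.ne']
  calc p * Real.log (q / p) ≤ p * (q / p - 1) :=
        mul_le_mul_of_nonneg_left (Real.log_le_sub_one_of_pos (div_pos hq hp)) hp.le
    _ = q - p := by field_simp

lemma submod_aux {α β γ : Type*} [Fintype α] [Fintype β] [Fintype γ]
    (p : α → β → γ → ℝ) (hp : ∀ x y z, 0 ≤ p x y z) :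
    (∑ x, ∑ y, ∑ z, Real.negMulLog (p x y z)) +
      (∑ y, Real.negMulLog (∑ x, ∑ z, p x y z)) ≤
    (∑ x, ∑ y, Real.negMulLog (∑ z, p x y z)) +
      (∑ y, ∑ z, Real.negMulLog (∑ x, p x y z)) := by
  classical
  have hpxy0 : ∀ x y, 0 ≤ ∑ z, p x y z := fun x y => Finset.sum_nonneg fun z _ => hp x y z
  have hpyz0 : ∀ y z, 0 ≤ ∑ x, p x y z := fun y z => Finset.sum_nonneg fun x _ => hp x y z
  have hpy0 : ∀ y, 0 ≤ ∑ x, ∑ z, p x y z :=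
    fun y => Finset.sum_nonneg fun x _ => hpxy0 x y
  have E1 : (∑ x, ∑ y, Real.negMulLog (∑ z, p x y z)) =
      ∑ x, ∑ y, ∑ z, (-(p x y z * Real.log (∑ z', p x y z'))) := by
    refine Finset.sum_congr rfl fun x _ => Finset.sum_congr rfl fun y _ => ?_
    rw [sum_neg_mul_const, Real.negMulLog, neg_mul]
  have E2 : (∑ y, Real.negMulLog (∑ x, ∑ z, p x y z)) =
      ∑ x, ∑ y, ∑ z, (-(p x y z * Real.log (∑ x', ∑ z', p x' y z'))) := by
    calc ∑ y, Real.negMulLog (∑ x, ∑ z, p x y z)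
        = ∑ y, ∑ x, ∑ z, (-(p x y z * Real.log (∑ x', ∑ z', p x' y z'))) := by
          refine Finset.sum_congr rfl fun y _ => ?_
          rw [Real.negMulLog, neg_mul, Finset.sum_mul, ← Finset.sum_neg_distrib]
          exact Finset.sum_congr rfl fun x _ => (sum_neg_mul_const _ _ _).symm
      _ = _ := Finset.sum_comm
  have E3 : (∑ y, ∑ z, Real.negMulLog (∑ x, p x y z)) =
      ∑ x, ∑ y, ∑ z, (-(p x y z * Real.log (∑ x', p x' y z))) := by
    calc ∑ y, ∑ z, Real.negMulLog (∑ x, p x y z)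
        = ∑ y, ∑ z, ∑ x, (-(p x y z * Real.log (∑ x', p x' y z))) := by
          refine Finset.sum_congr rfl fun y _ => Finset.sum_congr rfl fun z _ => ?_
          rw [sum_neg_mul_const, Real.negMulLog, neg_mul]
      _ = ∑ y, ∑ x, ∑ z, (-(p x y z * Real.log (∑ x', p x' y z))) :=
          Finset.sum_congr rfl fun y _ => Finset.sum_comm
      _ = _ := Finset.sum_comm
  have hb : ∀ x y z, p x y z * (Real.log (∑ z', p x y z') + Real.log (∑ x', p x' y z)
        - Real.log (p x y z) - Real.log (∑ x', ∑ z', p x' y z'))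
      ≤ (if (∑ x', ∑ z', p x' y z') = 0 then 0
          else (∑ z', p x y z') * (∑ x', p x' y z) / (∑ x', ∑ z', p x' y z')) - p x y z := by
    intro x y z
    by_cases h0 : p x y z = 0
    · rw [h0, zero_mul, sub_zero]
      split_ifs with h
      · exact le_rfl
      · exact div_nonneg (mul_nonneg (hpxy0 x y) (hpyz0 y z)) (hpy0 y)
    · have hp' : 0 < p x y z := (hp x y z).lt_of_ne (Ne.symm h0)
      have hpxy' : 0 < ∑ z', p x y z' :=
        lt_of_lt_of_le hp' (Finset.single_le_sum (fun z _ => hp x y z) (Finset.mem_univ z))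
      have hpyz' : 0 < ∑ x', p x' y z :=
        lt_of_lt_of_le hp' (Finset.single_le_sum (fun x _ => hp x y z) (Finset.mem_univ x))
      have hpy' : 0 < ∑ x', ∑ z', p x' y z' :=
        lt_of_lt_of_le hpxy' (Finset.single_le_sum (fun x _ => hpxy0 x y) (Finset.mem_univ x))
      have hq : 0 < (∑ z', p x y z') * (∑ x', p x' y z) / (∑ x', ∑ z', p x' y z') := by
        positivity
      rw [if_neg hpy'.ne']
      have hlog : Real.log (∑ z', p x y z') + Real.log (∑ x', p x' y z)
            - Real.log (p x y z) - Real.log (∑ x', ∑ z', p x' y z')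
          = Real.log ((∑ z', p x y z') * (∑ x', p x' y z) / (∑ x', ∑ z', p x' y z'))
            - Real.log (p x y z) := by
        rw [Real.log_div (by positivity) hpy'.ne', Real.log_mul hpxy'.ne' hpyz'.ne']
        ring
      rw [hlog]
      exact log_ratio_bound hp' hq
  have hrsum : (∑ x, ∑ y, ∑ z, (if (∑ x', ∑ z', p x' y z') = 0 then 0
          else (∑ z', p x y z') * (∑ x', p x' y z) / (∑ x', ∑ z', p x' y z')))
      = ∑ x, ∑ y, ∑ z, p x y z := by
    calc (∑ x, ∑ y, ∑ z, (if (∑ x', ∑ z', p x' y z') = 0 then 0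
          else (∑ z', p x y z') * (∑ x', p x' y z) / (∑ x', ∑ z', p x' y z')))
        = (∑ y, ∑ x, ∑ z, (if (∑ x', ∑ z', p x' y z') = 0 then 0
          else (∑ z', p x y z') * (∑ x', p x' y z) / (∑ x', ∑ z', p x' y z'))) :=
          Finset.sum_comm
      _ = ∑ y, ∑ x, ∑ z, p x y z := ?_
      _ = ∑ x, ∑ y, ∑ z, p x y z := Finset.sum_comm
    refine Finset.sum_congr rfl fun y _ => ?_
    by_cases h : (∑ x', ∑ z', p x' y z') = 0
    · simp only [h, if_pos]
      simp [h]
    · simp only [if_neg h]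
      have hz : (∑ z, ∑ x', p x' y z) = ∑ x', ∑ z', p x' y z' := Finset.sum_comm
      calc ∑ x, ∑ z, (∑ z', p x y z') * (∑ x', p x' y z) / (∑ x', ∑ z', p x' y z')
          = ∑ x, (∑ z', p x y z') * (∑ z, (∑ x', p x' y z)) / (∑ x', ∑ z', p x' y z') := by
            refine Finset.sum_congr rfl fun x _ => ?_
            rw [← Finset.sum_div, ← Finset.mul_sum]
        _ = (∑ x, ∑ z', p x y z') * (∑ z, (∑ x', p x' y z)) / (∑ x', ∑ z', p x' y z') := by
            rw [← Finset.sum_div, ← Finset.sum_mul]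
        _ = ∑ x, ∑ z, p x y z := by
            rw [hz, mul_div_assoc, div_self h, mul_one]
  -- put everything together
  have key : (∑ x, ∑ y, ∑ z, (p x y z * (Real.log (∑ z', p x y z') + Real.log (∑ x', p x' y z)
        - Real.log (p x y z) - Real.log (∑ x', ∑ z', p x' y z')))) ≤ 0 := by
    calc _ ≤ ∑ x, ∑ y, ∑ z, ((if (∑ x', ∑ z', p x' y z') = 0 then 0
          else (∑ z', p x y z') * (∑ x', p x' y z) / (∑ x', ∑ z', p x' y z')) - p x y z) := by
          refine Finset.sum_le_sum fun x _ => Finset.sum_le_sum fun y _ =>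
            Finset.sum_le_sum fun z _ => hb x y z
      _ = 0 := by
          simp only [Finset.sum_sub_distrib]
          rw [hrsum]
          ring
  rw [E1, E2, E3]
  have comb : (∑ x, ∑ y, ∑ z, Real.negMulLog (p x y z)) +
      (∑ x, ∑ y, ∑ z, (-(p x y z * Real.log (∑ x', ∑ z', p x' y z')))) -
      (∑ x, ∑ y, ∑ z, (-(p x y z * Real.log (∑ z', p x y z')))) -
      (∑ x, ∑ y, ∑ z, (-(p x y z * Real.log (∑ x', p x' y z)))) =
      (∑ x, ∑ y, ∑ z, (p x y z * (Real.log (∑ z', p x y z') + Real.log (∑ x', p x' y z)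
        - Real.log (p x y z) - Real.log (∑ x', ∑ z', p x' y z')))) := by
    simp only [← Finset.sum_sub_distrib, ← Finset.sum_add_distrib]
    refine Finset.sum_congr rfl fun x _ => Finset.sum_congr rfl fun y _ =>
      Finset.sum_congr rfl fun z _ => ?_
    rw [Real.negMulLog]
    ring
  linarith [comb, key]

section S
variable {Ω : Type*} [Fintype Ω] (μ : Ω → ℝ)
variable {α β γ : Type*} [Fintype α] [DecidableEq α] [Fintype β] [DecidableEq β]
  [Fintype γ] [DecidableEq γ]

lemma probOf_pair_fst (X : Ω → α) (Y : Ω → β) (Z : Ω → γ) (x : α) (y : β) :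
    probOf μ (fun ω => (X ω, Y ω)) (x, y) =
      ∑ z, probOf μ (fun ω => (X ω, Y ω, Z ω)) (x, y, z) := by
  classical
  simp only [probOf, Finset.sum_filter]
  rw [Finset.sum_comm]
  refine Finset.sum_congr rfl fun ω _ => ?_
  by_cases h : X ω = x ∧ Y ω = y
  · simp [Prod.ext_iff, h]
  · simp only [Prod.ext_iff] at *
    rw [if_neg h]
    rw [Finset.sum_eq_zero]
    intro z _
    rw [if_neg]
    tauto

lemma probOf_pair_snd (X : Ω → α) (Y : Ω → β) (Z : Ω → γ) (y : β) (z : γ) :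
    probOf μ (fun ω => (Y ω, Z ω)) (y, z) =
      ∑ x, probOf μ (fun ω => (X ω, Y ω, Z ω)) (x, y, z) := by
  classical
  simp only [probOf, Finset.sum_filter]
  rw [Finset.sum_comm]
  refine Finset.sum_congr rfl fun ω _ => ?_
  by_cases h : Y ω = y ∧ Z ω = z
  · simp [Prod.ext_iff, h]
  · simp only [Prod.ext_iff] at *
    rw [if_neg h]
    rw [Finset.sum_eq_zero]
    intro x _
    rw [if_neg]
    tauto

lemma probOf_snd (X : Ω → α) (Y : Ω → β) (y : β) :
    probOf μ Y y = ∑ x, probOf μ (fun ω => (X ω, Y ω)) (x, y) := by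
  classical
  simp only [probOf, Finset.sum_filter]
  rw [Finset.sum_comm]
  refine Finset.sum_congr rfl fun ω _ => ?_
  by_cases h : Y ω = y
  · simp [Prod.ext_iff, h]
  · simp only [Prod.ext_iff] at *
    rw [if_neg h]
    rw [Finset.sum_eq_zero]
    intro x _
    rw [if_neg]
    tauto

lemma probOf_mid (X : Ω → α) (Y : Ω → β) (Z : Ω → γ) (y : β) :
    probOf μ Y y = ∑ x, ∑ z, probOf μ (fun ω => (X ω, Y ω, Z ω)) (x, y, z) := by
  rw [probOf_snd μ X Y y]
  exact Finset.sum_congr rfl fun x _ => probOf_pair_fst μ X Y Z x y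

lemma shannonH_submod (hμ0 : ∀ ω, 0 ≤ μ ω) (X : Ω → α) (Y : Ω → β) (Z : Ω → γ) :
    shannonH μ (fun ω => (X ω, Y ω, Z ω)) + shannonH μ Y ≤
      shannonH μ (fun ω => (X ω, Y ω)) + shannonH μ (fun ω => (Y ω, Z ω)) := by
  classical
  have hp : ∀ x y z, 0 ≤ probOf μ (fun ω => (X ω, Y ω, Z ω)) (x, y, z) :=
    fun x y z => probOf_nonneg μ hμ0 _ _
  have h1 : shannonH μ (fun ω => (X ω, Y ω, Z ω)) =
      ∑ x, ∑ y, ∑ z, Real.negMulLog (probOf μ (fun ω => (X ω, Y ω, Z ω)) (x, y, z)) := by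
    rw [shannonH, Fintype.sum_prod_type]
    exact Finset.sum_congr rfl fun x _ => Fintype.sum_prod_type _
  have h2 : shannonH μ (fun ω => (X ω, Y ω)) =
      ∑ x, ∑ y, Real.negMulLog (∑ z, probOf μ (fun ω => (X ω, Y ω, Z ω)) (x, y, z)) := by
    rw [shannonH, Fintype.sum_prod_type]
    exact Finset.sum_congr rfl fun x _ => Finset.sum_congr rfl fun y _ => by
      rw [probOf_pair_fst μ X Y Z]
  have h3 : shannonH μ Y =
      ∑ y, Real.negMulLog (∑ x, ∑ z, probOf μ (fun ω => (X ω, Y ω, Z ω)) (x, y, z)) := by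
    rw [shannonH]
    exact Finset.sum_congr rfl fun y _ => by rw [probOf_mid μ X Y Z]
  have h4 : shannonH μ (fun ω => (Y ω, Z ω)) =
      ∑ y, ∑ z, Real.negMulLog (∑ x, probOf μ (fun ω => (X ω, Y ω, Z ω)) (x, y, z)) := by
    rw [shannonH, Fintype.sum_prod_type]
    exact Finset.sum_congr rfl fun y _ => Finset.sum_congr rfl fun z _ => by
      rw [probOf_pair_snd μ X Y Z]
  rw [h1, h2, h3, h4]
  exact submod_aux _ hp

end S

section Comb
variable {L : ℕ} (h : Finset (Fin L) → ℝ)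

lemma han_local (h0 : h ∅ = 0)
    (hsub : ∀ J K, h (J ∪ K) + h (J ∩ K) ≤ h J + h K) :
    ∀ J : Finset (Fin L), ((J.card : ℝ) - 1) * h J ≤ ∑ l ∈ J, h (J.erase l) := by
  intro J
  induction J using Finset.induction_on with
  | empty => simp [h0]
  | @insert a s ha ih =>
    have key : ∀ l ∈ s, h (insert a s) + h (s.erase l) - h s ≤ h (insert a (s.erase l)) := by
      intro l hl
      have hs := hsub (insert a (s.erase l)) s
      have hU : insert a (s.erase l) ∪ s = insert a s := by
        rw [Finset.insert_union, Finset.union_eq_right.mpr (Finset.erase_subset l s)]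
      have hI : insert a (s.erase l) ∩ s = s.erase l := by
        rw [Finset.insert_inter_of_notMem ha]
        exact Finset.inter_eq_left.mpr (Finset.erase_subset l s)
      rw [hU, hI] at hs
      linarith
    have e1 : ∑ l ∈ insert a s, h ((insert a s).erase l)
        = h s + ∑ l ∈ s, h (insert a (s.erase l)) := by
      rw [Finset.sum_insert ha, Finset.erase_insert ha]
      congr 1
      refine Finset.sum_congr rfl fun l hl => ?_
      rw [Finset.erase_insert_of_ne]
      intro hla
      exact ha (hla ▸ hl)
    have e2 : ∑ l ∈ s, (h (insert a s) + h (s.erase l) - h s)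
        = s.card * h (insert a s) + (∑ l ∈ s, h (s.erase l)) - s.card * h s := by
      rw [Finset.sum_sub_distrib, Finset.sum_add_distrib, Finset.sum_const, Finset.sum_const,
        nsmul_eq_mul, nsmul_eq_mul]
    have e3 : ∑ l ∈ s, (h (insert a s) + h (s.erase l) - h s) ≤
        ∑ l ∈ s, h (insert a (s.erase l)) :=
      Finset.sum_le_sum key
    have hcard : ((insert a s).card : ℝ) = s.card + 1 := by
      rw [Finset.card_insert_of_notMem ha]; push_cast; ring
    rw [e1, hcard]
    rw [e2] at e3
    linarith [ih]

lemma han_step (h0 : h ∅ = 0)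
    (hsub : ∀ J K, h (J ∪ K) + h (J ∩ K) ≤ h J + h K) (i : ℕ) :
    (i : ℝ) * ∑ K ∈ (univ : Finset (Fin L)).powersetCard (i + 1), h K ≤
      ((L - i : ℕ) : ℝ) * ∑ J ∈ (univ : Finset (Fin L)).powersetCard i, h J := by
  classical
  have local_le : ∀ K ∈ (univ : Finset (Fin L)).powersetCard (i + 1),
      (i : ℝ) * h K ≤ ∑ l ∈ K, h (K.erase l) := by
    intro K hK
    have hcard : K.card = i + 1 := (Finset.mem_powersetCard.mp hK).2
    have := han_local h h0 hsub K
    rw [hcard] at this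
    push_cast at this
    simpa using this
  have reindex : ∑ K ∈ (univ : Finset (Fin L)).powersetCard (i + 1), ∑ l ∈ K, h (K.erase l)
      = ∑ J ∈ (univ : Finset (Fin L)).powersetCard i, ∑ _l ∈ Jᶜ, h J := by
    rw [Finset.sum_sigma', Finset.sum_sigma']
    refine Finset.sum_nbij' (fun x => ⟨x.1.erase x.2, x.2⟩) (fun x => ⟨insert x.2 x.1, x.2⟩)
      ?_ ?_ ?_ ?_ ?_
    · rintro ⟨K, l⟩ hKl
      simp only [Finset.mem_sigma, Finset.mem_powersetCard] at *
      obtain ⟨⟨hKsub, hKcard⟩, hl⟩ := hKl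
      refine ⟨⟨Finset.subset_univ _, ?_⟩, ?_⟩
      · simp [Finset.card_erase_of_mem hl, hKcard]
      · simp [Finset.mem_compl]
    · rintro ⟨J, l⟩ hJl
      simp only [Finset.mem_sigma, Finset.mem_powersetCard, Finset.mem_compl] at *
      obtain ⟨⟨hJsub, hJcard⟩, hl⟩ := hJl
      refine ⟨⟨Finset.subset_univ _, ?_⟩, Finset.mem_insert_self _ _⟩
      rw [Finset.card_insert_of_notMem hl, hJcard]
    · rintro ⟨K, l⟩ hKl
      simp only [Finset.mem_sigma, Finset.mem_powersetCard] at hKl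
      simp [Finset.insert_erase hKl.2]
    · rintro ⟨J, l⟩ hJl
      simp only [Finset.mem_sigma, Finset.mem_powersetCard, Finset.mem_compl] at hJl
      simp [Finset.erase_insert hJl.2]
    · rintro ⟨K, l⟩ hKl
      rfl
  have count : ∀ J ∈ (univ : Finset (Fin L)).powersetCard i,
      ∑ _l ∈ Jᶜ, h J = ((L - i : ℕ) : ℝ) * h J := by
    intro J hJ
    have hcard : J.card = i := (Finset.mem_powersetCard.mp hJ).2
    rw [Finset.sum_const, Finset.card_compl, hcard, Fintype.card_fin, nsmul_eq_mul]
  calc (i : ℝ) * ∑ K ∈ (univ : Finset (Fin L)).powersetCard (i + 1), h K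
      = ∑ K ∈ (univ : Finset (Fin L)).powersetCard (i + 1), (i : ℝ) * h K := by
        rw [Finset.mul_sum]
    _ ≤ ∑ K ∈ (univ : Finset (Fin L)).powersetCard (i + 1), ∑ l ∈ K, h (K.erase l) :=
        Finset.sum_le_sum local_le
    _ = ∑ J ∈ (univ : Finset (Fin L)).powersetCard i, ∑ _l ∈ Jᶜ, h J := reindex
    _ = ∑ J ∈ (univ : Finset (Fin L)).powersetCard i, ((L - i : ℕ) : ℝ) * h J :=
        Finset.sum_congr rfl count
    _ = ((L - i : ℕ) : ℝ) * ∑ J ∈ (univ : Finset (Fin L)).powersetCard i, h J := by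
        rw [Finset.mul_sum]

lemma han_avg (h0 : h ∅ = 0)
    (hsub : ∀ J K, h (J ∪ K) + h (J ∩ K) ≤ h J + h K) :
    ∀ k i : ℕ, 1 ≤ i → i + k = L →
      h univ / L ≤ (1 / (L.choose i : ℝ)) *
        ∑ J ∈ (univ : Finset (Fin L)).powersetCard i, h J / i := by
  intro k
  induction k with
  | zero =>
    intro i hi1 hiL
    rw [Nat.add_zero] at hiL
    subst hiL
    have huniv : (univ : Finset (Fin i)).powersetCard i = {univ} := by
      have h2 := Finset.powersetCard_self (univ : Finset (Fin i))
      rwa [Finset.card_univ, Fintype.card_fin] at h2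
    rw [huniv, Nat.choose_self]
    simp
  | succ k ih =>
    intro i hi1 hik
    have hiL : (i + 1) + k = L := by omega
    have IH := ih (i + 1) (by omega) hiL
    refine IH.trans ?_
    have step := han_step h h0 hsub i
    have hc0 : 0 < (L.choose i : ℝ) := by
      exact_mod_cast Nat.choose_pos (by omega : i ≤ L)
    have hc1 : 0 < (L.choose (i + 1) : ℝ) := by
      exact_mod_cast Nat.choose_pos (by omega : i + 1 ≤ L)
    have hid : ((i + 1 : ℕ) : ℝ) * (L.choose (i + 1) : ℝ) = ((L - i : ℕ) : ℝ) * (L.choose i : ℝ) := by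
      rw [mul_comm, mul_comm ((L - i : ℕ) : ℝ)]
      exact_mod_cast Nat.choose_succ_right_eq L i
    have hi0 : 0 < (i : ℝ) := by exact_mod_cast hi1
    have hLi : (0 : ℝ) < ((L - i : ℕ) : ℝ) := by
      have : 0 < L - i := by omega
      exact_mod_cast this
    set S1 := ∑ K ∈ (univ : Finset (Fin L)).powersetCard (i + 1), h K with hS1
    set S0 := ∑ J ∈ (univ : Finset (Fin L)).powersetCard i, h J with hS0
    have lhs_eq : (1 / (L.choose (i+1) : ℝ)) *
        ∑ J ∈ (univ : Finset (Fin L)).powersetCard (i+1), h J / (↑(i+1)) =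
        S1 / (((i+1 : ℕ) : ℝ) * (L.choose (i+1) : ℝ)) := by
      rw [← Finset.sum_div, one_div_mul_eq_div, div_div, hS1]
    have rhs_eq : (1 / (L.choose i : ℝ)) *
        ∑ J ∈ (univ : Finset (Fin L)).powersetCard i, h J / (i : ℝ) =
        S0 / ((i : ℝ) * (L.choose i : ℝ)) := by
      rw [← Finset.sum_div, one_div_mul_eq_div, div_div, hS0]
    rw [lhs_eq, rhs_eq]
    rw [div_le_div_iff₀ (by positivity) (by positivity)]
    rw [hid]
    calc S1 * ((i : ℝ) * (L.choose i : ℝ)) = ((i : ℝ) * S1) * (L.choose i : ℝ) := by ring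
      _ ≤ (((L - i : ℕ) : ℝ) * S0) * (L.choose i : ℝ) :=
          mul_le_mul_of_nonneg_right step hc0.le
      _ = S0 * (((L - i : ℕ) : ℝ) * (L.choose i : ℝ)) := by ring

end Comb

attribute [irreducible] shannonH probOf

set_option maxHeartbeats 1000000 in
/-- Generalized Han inequality: the average over all size-`i` subsets `J` of `{1,…,L}`
of `H(A_J)/i` is at least `H(A_1,…,A_L)/L`. -/
theorem han_inequality {Ω : Type*} [Fintype Ω] (μ : Ω → ℝ)
    (hμ0 : ∀ ω, 0 ≤ μ ω) (hμ1 : ∑ ω, μ ω = 1)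
    {L : ℕ} (hL : 1 ≤ L) (α : Fin L → Type*) [∀ l, Fintype (α l)] [∀ l, DecidableEq (α l)]
    (A : (l : Fin L) → Ω → α l) (i : ℕ) (hi1 : 1 ≤ i) (hiL : i ≤ L) :
    shannonH μ (fun ω => (fun l : Fin L => A l ω)) / L ≤
      (1 / (L.choose i : ℝ)) *
        ∑ J ∈ (univ : Finset (Fin L)).powersetCard i,
          shannonH μ (fun ω => (fun l : {x // x ∈ J} => A l.val ω)) / i := by
  classical
  set F : Finset (Fin L) → Ω → ((l : Fin L) → Option (α l)) :=
    fun J ω l => if l ∈ J then some (A l ω) else none with hF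
  set h : Finset (Fin L) → ℝ := fun J => shannonH μ (F J) with hh
  -- h ∅ = 0
  have h0 : h ∅ = 0 := by
    have : F ∅ = fun _ => (fun l => (none : Option (α l))) := by
      funext ω l; simp [hF]
    rw [hh]; dsimp only
    rw [this]
    exact shannonH_const μ hμ1 _
  -- submodularity
  have hsub : ∀ J K, h (J ∪ K) + h (J ∩ K) ≤ h J + h K := by
    intro J K
    set X := F (J \ K) with hX
    set Y := F (J ∩ K) with hY
    set Z := F (K \ J) with hZ
    have eU : h (J ∪ K) = shannonH μ (fun ω => (X ω, Y ω, Z ω)) := by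
      rw [hh]
      refine shannonH_congr μ (F (J ∪ K)) _
        (fun g => (fun l => if l ∈ J \ K then g l else none,
                   fun l => if l ∈ J ∩ K then g l else none,
                   fun l => if l ∈ K \ J then g l else none))
        (fun t l => if l ∈ J \ K then t.1 l else if l ∈ J ∩ K then t.2.1 l else t.2.2 l)
        ?_ ?_
      · intro ω
        refine Prod.ext ?_ (Prod.ext ?_ ?_) <;> funext l <;>
          by_cases hJ : l ∈ J <;> by_cases hK : l ∈ K <;>
          simp [hF, hX, hY, hZ, hJ, hK]
      · intro ω
        funext l
        by_cases hJ : l ∈ J <;> by_cases hK : l ∈ K <;>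
          simp [hF, hX, hY, hZ, hJ, hK]
    have eJ : h J = shannonH μ (fun ω => (X ω, Y ω)) := by
      rw [hh]
      refine shannonH_congr μ (F J) _
        (fun g => (fun l => if l ∈ J \ K then g l else none,
                   fun l => if l ∈ J ∩ K then g l else none))
        (fun t l => if l ∈ J \ K then t.1 l else t.2 l)
        ?_ ?_
      · intro ω
        refine Prod.ext ?_ ?_ <;> funext l <;>
          by_cases hJ : l ∈ J <;> by_cases hK : l ∈ K <;>
          simp [hF, hX, hY, hJ, hK]
      · intro ω
        funext l
        by_cases hJ : l ∈ J <;> by_cases hK : l ∈ K <;>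
          simp [hF, hX, hY, hJ, hK]
    have eK : h K = shannonH μ (fun ω => (Y ω, Z ω)) := by
      rw [hh]
      refine shannonH_congr μ (F K) _
        (fun g => (fun l => if l ∈ J ∩ K then g l else none,
                   fun l => if l ∈ K \ J then g l else none))
        (fun t l => if l ∈ J ∩ K then t.1 l else t.2 l)
        ?_ ?_
      · intro ω
        refine Prod.ext ?_ ?_ <;> funext l <;>
          by_cases hJ : l ∈ J <;> by_cases hK : l ∈ K <;>
          simp [hF, hY, hZ, hJ, hK]
      · intro ω
        funext l
        by_cases hJ : l ∈ J <;> by_cases hK : l ∈ K <;>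
          simp [hF, hY, hZ, hJ, hK]
    have eI : h (J ∩ K) = shannonH μ Y := by rw [hh]
    rw [eU, eJ, eK, eI]
    exact shannonH_submod μ hμ0 X Y Z
  -- total entropy
  have htot : shannonH μ (fun ω => (fun l : Fin L => A l ω)) = h univ := by
    rw [hh]; dsimp only
    have : F univ = fun ω => (fun f => (fun l => some (f l) : (l : Fin L) → Option (α l)))
        ((fun l : Fin L => A l ω)) := by
      funext ω l; simp [hF]
    rw [this]
    exact (shannonH_comp_inj μ _ _ (fun f g hfg => funext fun l =>
      Option.some_injective _ (congrFun hfg l))).symm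
  -- per-subset entropies
  have hJeq : ∀ J ∈ (univ : Finset (Fin L)).powersetCard i,
      shannonH μ (fun ω => (fun l : {x // x ∈ J} => A l.val ω)) = h J := by
    intro J _
    rw [hh]; dsimp only
    have heq : F J = fun ω => (fun (f : (l : {x // x ∈ J}) → α l.val) (l : Fin L) =>
        if hl : l ∈ J then some (f ⟨l, hl⟩) else none)
        ((fun l : {x // x ∈ J} => A l.val ω)) := by
      funext ω l
      by_cases hl : l ∈ J <;> simp [hF, hl]
    have hinj : Function.Injective
        (fun (f : (l : {x // x ∈ J}) → α l.val) (l : Fin L) =>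
            if hl : l ∈ J then some (f ⟨l, hl⟩) else none) := by
      intro f g hfg
      funext l
      have h2 := congrFun hfg l.val
      dsimp only at h2
      rw [dif_pos l.2, dif_pos l.2] at h2
      simpa using h2
    rw [heq]
    exact (shannonH_comp_inj μ (fun ω => (fun l : {x // x ∈ J} => A l.val ω)) _ hinj).symm
  have hsum : ∑ J ∈ (univ : Finset (Fin L)).powersetCard i,
      shannonH μ (fun ω => (fun l : {x // x ∈ J} => A l.val ω)) / (i : ℝ) =
      ∑ J ∈ (univ : Finset (Fin L)).powersetCard i, h J / i :=
    Finset.sum_congr rfl fun J hJ => by rw [hJeq J hJ]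
  rw [htot, hsum]
  exact han_avg h h0 hsub (L - i) i hi1 (by omega)
end

section
/- Let D >= K >= 1 be integers and M_1,...,M_K >= 0 reals. Define for a subset S = {j_1 < ... < j_s} of {1,...,K}: alpha_1 = M_{j_1}/D and for k in {2,...,s}, alpha_k = min( (sum_{i=1}^k M_{j_i})/(D-k+1), (1/(s-k+1))*( (s/D)*sum_{i=1}^s M_{j_i} - sum_{i=1}^{k-1} alpha_i ) ). Then the alpha_k are nondecreasing in k and satisfy sum_{k=1}^s alpha_k <= (s/D)*sum_{i=1}^s M_{j_i}. -/
open Finset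

/-- Auxiliary recursion computing the pair `(α_k, ∑_{i ≤ k} α_i)` (0-based indexing) of the
parameters `α⋆` defined in the converse bound: `α_0 = M_{j_1}/D` and, for `k ≥ 1`,
`α_k = min( (∑_{i=0}^k M_{j_i})/(D-k), (1/(s-k)) ( (s/D) ∑_{i<s} M_{j_i} - ∑_{i<k} α_i ) )`. -/
noncomputable def alphaAux (D s : ℕ) (Mj : ℕ → ℝ) : ℕ → ℝ × ℝ
  | 0 => (Mj 0 / D, Mj 0 / D)
  | (k + 1) =>
    let prev := alphaAux D s Mj k
    let a := min ((∑ i ∈ Finset.range (k + 2), Mj i) / ((D : ℝ) - (k + 1)))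
      ((1 / ((s : ℝ) - (k + 1))) *
        (((s : ℝ) / (D : ℝ)) * (∑ i ∈ Finset.range s, Mj i) - prev.2))
    (a, prev.2 + a)

/-- The parameter `α⋆_k` (0-based). -/
noncomputable def alphaSeq (D s : ℕ) (Mj : ℕ → ℝ) (k : ℕ) : ℝ := (alphaAux D s Mj k).1

lemma alphaAux_fst_succ (D s : ℕ) (Mj : ℕ → ℝ) (k : ℕ) :
    (alphaAux D s Mj (k+1)).1 =
      min ((∑ i ∈ Finset.range (k + 2), Mj i) / ((D : ℝ) - (k + 1)))
      ((1 / ((s : ℝ) - (k + 1))) *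
        (((s : ℝ) / (D : ℝ)) * (∑ i ∈ Finset.range s, Mj i) - (alphaAux D s Mj k).2)) := rfl

lemma alphaAux_snd_succ (D s : ℕ) (Mj : ℕ → ℝ) (k : ℕ) :
    (alphaAux D s Mj (k+1)).2 = (alphaAux D s Mj k).2 + (alphaAux D s Mj (k+1)).1 := rfl

lemma alphaAux_snd_eq_sum (D s : ℕ) (Mj : ℕ → ℝ) (k : ℕ) :
    (alphaAux D s Mj k).2 = ∑ i ∈ Finset.range (k+1), (alphaAux D s Mj i).1 := by
  induction k with
  | zero => simp [alphaAux]
  | succ n ih => rw [Finset.sum_range_succ, ← ih, alphaAux_snd_succ]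

/-- Invariant: the partial sums of the `α⋆` stay below `(s/D) ∑_{i<s} M_{j_i}`. -/
lemma alphaAux_snd_le (D s : ℕ) (Mj : ℕ → ℝ) (hMj : ∀ i, 0 ≤ Mj i)
    (hs : 1 ≤ s) (hsD : s ≤ D) :
    ∀ k, k < s →
      (alphaAux D s Mj k).2 ≤ (s : ℝ) / D * ∑ i ∈ Finset.range s, Mj i := by
  have hD : (0:ℝ) < D := by exact_mod_cast lt_of_lt_of_le hs hsD
  set T := ∑ i ∈ Finset.range s, Mj i with hT
  have hT0 : Mj 0 ≤ T := Finset.single_le_sum (fun i _ => hMj i) (Finset.mem_range.mpr hs)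
  intro k
  induction k with
  | zero =>
    intro _
    show Mj 0 / D ≤ (s:ℝ)/D * T
    rw [div_mul_eq_mul_div]
    apply (div_le_div_iff_of_pos_right hD).mpr
    nlinarith [hMj 0, (by exact_mod_cast hs : (1:ℝ) ≤ (s:ℕ)), (hMj 0).trans hT0]
  | succ n ih =>
    intro hn1
    have hIH := ih (Nat.lt_of_succ_lt hn1)
    have hc : (1:ℝ) ≤ (s:ℝ) - (n+1) := by
      have : (n:ℝ) + 2 ≤ s := by exact_mod_cast hn1
      linarith
    set B := (s:ℝ)/D * T - (alphaAux D s Mj n).2 with hB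
    have hB0 : 0 ≤ B := by simp [hB]; linarith
    have hαle : (alphaAux D s Mj (n+1)).1 ≤ B / ((s:ℝ) - (n+1)) := by
      rw [alphaAux_fst_succ]
      exact (min_le_right _ _).trans_eq (one_div_mul_eq_div _ _)
    have hBc : B / ((s:ℝ) - (n+1)) ≤ B := div_le_self hB0 hc
    rw [alphaAux_snd_succ]
    linarith

/-- Monotonicity of the `α⋆`. -/
lemma alphaAux_mono (D s : ℕ) (Mj : ℕ → ℝ) (hMj : ∀ i, 0 ≤ Mj i)
    (hsD : s ≤ D) (k : ℕ) (hk : k + 1 < s) :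
    (alphaAux D s Mj k).1 ≤ (alphaAux D s Mj (k+1)).1 := by
  have hs2 : 2 ≤ s := by omega
  have hD : (0:ℝ) < D := by
    have : 0 < D := by omega
    exact_mod_cast this
  set T := ∑ i ∈ Finset.range s, Mj i with hT
  have hc1 : (1:ℝ) ≤ (s:ℝ) - (k+1) := by
    have : (k:ℝ) + 2 ≤ s := by exact_mod_cast hk
    linarith
  have hc1' : (0:ℝ) < (s:ℝ) - (k+1) := by linarith
  have hDk : (1:ℝ) ≤ (D:ℝ) - (k+1) := by
    have : (k:ℝ) + 2 ≤ D := by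
      have : k + 2 ≤ D := by omega
      exact_mod_cast this
    linarith
  rw [alphaAux_fst_succ, le_min_iff]
  constructor
  · -- α_k ≤ P_{k+1}
    match k with
    | 0 =>
      show Mj 0 / D ≤ _
      apply div_le_div₀ (Finset.sum_nonneg fun i _ => hMj i)
        (Finset.single_le_sum (fun i _ => hMj i) (by simp)) (by linarith)
      linarith
    | (m+1) =>
      refine le_trans (alphaAux_fst_succ D s Mj m ▸ min_le_left _ _) ?_
      apply div_le_div₀ (Finset.sum_nonneg fun i _ => hMj i)
        (Finset.sum_le_sum_of_subset_of_nonneg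
          (Finset.range_subset_range.mpr (by omega)) fun i _ _ => hMj i) (by linarith)
      push_cast; linarith
  · -- α_k ≤ Q_{k+1}
    rw [one_div_mul_eq_div, le_div_iff₀ hc1']
    match k, hk with
    | 0, hk =>
      show Mj 0 / D * _ ≤ (s:ℝ)/D * T - Mj 0 / D
      have h1 : Mj 0 / D ≤ T / D := by
        apply (div_le_div_iff_of_pos_right hD).mpr
        exact Finset.single_le_sum (fun i _ => hMj i) (Finset.mem_range.mpr (by omega))
      have h2 : (0:ℝ) ≤ Mj 0 / D := div_nonneg (hMj 0) hD.le
      have h3 : (s:ℝ)/D * T = (s:ℝ) * (T / D) := by ring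
      have h4 : (0:ℝ) ≤ (s:ℝ) := by positivity
      push_cast
      nlinarith
    | (m+1), hk =>
      have hcm : (0:ℝ) < (s:ℝ) - (m+1) := by
        have : (m:ℝ) + 2 ≤ s := by exact_mod_cast (by omega : m + 2 ≤ s)
        linarith
      have hα : (alphaAux D s Mj (m+1)).1 ≤
          ((s:ℝ)/D * T - (alphaAux D s Mj m).2) / ((s:ℝ) - (m+1)) := by
        rw [alphaAux_fst_succ]
        exact (min_le_right _ _).trans_eq (one_div_mul_eq_div _ _)
      rw [le_div_iff₀ hcm] at hα
      rw [alphaAux_snd_succ]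
      set a := (alphaAux D s Mj (m+1)).1
      have hring : a * ((s:ℝ) - (↑(m+1) + 1)) = a * ((s:ℝ) - (m+1)) - a := by
        push_cast; ring
      linarith

/-- The parameters `α⋆_{S,1} ≤ … ≤ α⋆_{S,s}` are nondecreasing and their sum is at most
`(s/D) ∑_{i=1}^s M_{j_i}`. -/
theorem alpha_monotone_and_sum {D K s : ℕ} (hKD : K ≤ D) (hK : 1 ≤ K) (hs : 1 ≤ s)
    (M : Fin K → ℝ) (hM : ∀ k, 0 ≤ M k)
    (j : Fin s → Fin K) (hj : StrictMono j) :
    (∀ k : ℕ, k + 1 < s →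
      alphaSeq D s (fun i => if h : i < s then M (j ⟨i, h⟩) else 0) k ≤
        alphaSeq D s (fun i => if h : i < s then M (j ⟨i, h⟩) else 0) (k + 1)) ∧
    (∑ k ∈ Finset.range s, alphaSeq D s (fun i => if h : i < s then M (j ⟨i, h⟩) else 0) k ≤
      ((s : ℝ) / (D : ℝ)) * ∑ i ∈ Finset.range s,
        (fun i => if h : i < s then M (j ⟨i, h⟩) else 0) i) := by
  set Mj : ℕ → ℝ := fun i => if h : i < s then M (j ⟨i, h⟩) else 0 with hMjdef
  have hMj : ∀ i, 0 ≤ Mj i := by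
    intro i
    simp only [hMjdef]
    split
    · exact hM _
    · exact le_refl 0
  have hsK : s ≤ K := by
    have := Fintype.card_le_of_injective j hj.injective
    simpa using this
  have hsD : s ≤ D := hsK.trans hKD
  constructor
  · intro k hk
    exact alphaAux_mono D s Mj hMj hsD k hk
  · have h := alphaAux_snd_le D s Mj hMj hs hsD (s-1) (by omega)
    rw [alphaAux_snd_eq_sum, Nat.sub_add_cancel hs] at h
    simpa [alphaSeq] using h
end

section
/- Let K >= 2, t in {1,...,K-1}, and let c_1 <= c_2 <= ... <= c_K be positive reals. Define for each (t+1)-subset G of {1,...,K} the product P(G) = prod_{k not in G} c_k, and define M_k = (sum over t-subsets S containing k of prod_{k' not in S} c_{k'}) / (sum over (t+1)-subsets G of P(G)). Then M_1 >= M_2 >= ... >= M_K, i.e., weaker receivers (smaller c_k) are assigned larger normalized cache sizes. -/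
open Finset

/-!
Swapping a weaker receiver `i` with a stronger one `j` (`c i ≤ c j`) maps the `t`-subsets
containing `i` bijectively onto those containing `j`. If `i ∈ S`, the complement of the swapped
set differs from `Sᶜ` only in that the factor `c j` (if `j ∉ S`) is replaced by the smaller `c i`,
so every term of the numerator of `M_j` is dominated by the matching term of `M_i`, while the
denominator does not depend on `k`.
-/

namespace Finset

variable {α : Type*} [Fintype α] [DecidableEq α]

lemma prod_compl_map_equiv {M : Type*} [CommMonoid M] (σ : α ≃ α) (S : Finset α) (f : α → M) :
    ∏ k ∈ (S.map σ.toEmbedding)ᶜ, f k = ∏ k ∈ Sᶜ, f (σ k) :=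
  (prod_equiv σ (by simp) (fun _ _ => rfl)).symm

lemma sum_filter_mem_powersetCard_swap {M : Type*} [AddCommMonoid M] (t : ℕ) (i j : α)
    (f : Finset α → M) :
    ∑ S ∈ (univ.powersetCard t).filter (j ∈ ·), f S =
      ∑ S ∈ (univ.powersetCard t).filter (i ∈ ·), f (S.map (Equiv.swap i j).toEmbedding) := by
  refine (sum_equiv (Equiv.swap i j).finsetCongr (fun S => ?_) (fun _ _ => rfl)).symm
  simp [Equiv.swap_apply_right]

variable {R : Type*} [CommSemiring R] [PartialOrder R] [IsOrderedRing R]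

lemma prod_compl_map_swap_le {c : α → R} (hc : ∀ k, 0 ≤ c k) {i j : α} (hij : c i ≤ c j)
    {S : Finset α} (hi : i ∈ S) :
    ∏ k ∈ (S.map (Equiv.swap i j).toEmbedding)ᶜ, c k ≤ ∏ k ∈ Sᶜ, c k := by
  rw [prod_compl_map_equiv]
  refine prod_le_prod (fun k _ => hc _) fun k hk => ?_
  have hki : k ≠ i := by rintro rfl; exact mem_compl.mp hk hi
  rcases eq_or_ne k j with rfl | hkj
  · simpa using hij
  · rw [Equiv.swap_apply_of_ne_of_ne hki hkj]

lemma antitone_sum_filter_mem_prod_compl [Preorder α] {c : α → R} (hc : ∀ k, 0 ≤ c k)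
    (hmono : Monotone c) (t : ℕ) :
    Antitone fun k : α => ∑ S ∈ (univ.powersetCard t).filter (k ∈ ·), ∏ k' ∈ Sᶜ, c k' := by
  intro i j hij
  dsimp only
  rw [sum_filter_mem_powersetCard_swap t i j]
  exact sum_le_sum fun S hS => prod_compl_map_swap_le hc (hmono hij) (mem_filter.mp hS).2

end Finset

theorem cache_assignment_antitone_general {K t : ℕ}
    (c : Fin K → ℝ) (hc : ∀ k, 0 < c k) (hmono : Monotone c) :
    Antitone (fun k : Fin K =>
      (∑ S ∈ ((univ : Finset (Fin K)).powersetCard t).filter (fun S => k ∈ S),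
          ∏ k' ∈ Sᶜ, c k') /
      (∑ G ∈ (univ : Finset (Fin K)).powersetCard (t + 1), ∏ k' ∈ Gᶜ, c k')) := by
  have hc' : ∀ k, 0 ≤ c k := fun k => (hc k).le
  intro i j hij
  exact div_le_div_of_nonneg_right (antitone_sum_filter_mem_prod_compl hc' hmono t hij)
    (sum_nonneg fun G _ => prod_nonneg fun k _ => hc' k)

/-- Generalized coded caching assigns larger normalized cache sizes to weaker receivers:
with `c_1 ≤ … ≤ c_K` (`c_k = I(X;Y_k)`) and
`M_k = (∑_{S ∋ k, |S|=t} ∏_{k'∉S} c_{k'}) / (∑_{|G|=t+1} ∏_{k'∉G} c_{k'})`,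
the map `k ↦ M_k` is antitone. -/
theorem cache_assignment_antitone {K t : ℕ} (hK : 2 ≤ K) (ht1 : 1 ≤ t) (ht2 : t ≤ K - 1)
    (c : Fin K → ℝ) (hc : ∀ k, 0 < c k) (hmono : Monotone c) :
    Antitone (fun k : Fin K =>
      (∑ S ∈ ((univ : Finset (Fin K)).powersetCard t).filter (fun S => k ∈ S),
          ∏ k' ∈ Sᶜ, c k') /
      (∑ G ∈ (univ : Finset (Fin K)).powersetCard (t + 1), ∏ k' ∈ Gᶜ, c k')) :=
  cache_assignment_antitone_general c hc hmono
end

section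
/- Let delta_1,...,delta_K in [0,1) with C_S = (sum_{s in S} 1/(1-delta_s))^{-1}. If not all delta_k are equal and M > M_1 >= 0, then min{ C_K + M_1/D + ((M - M_1)/D) * K*C_K/((K-1)*C_{{2,...,K}}), C_1 + M_1/D } < C_K + M/D, where C_K := C_{{1,...,K}} and C_1 = 1 - delta_1, provided K >= 2 and delta_1 >= delta_2 >= ... >= delta_K. -/
open Finset

/-- The symmetric capacity `C_S = (∑_{s∈S} 1/(1-δ_s))⁻¹` of an erasure BC. -/
noncomputable def erasureCap {K : ℕ} (δ : Fin K → ℝ) (S : Finset (Fin K)) : ℝ :=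
  (∑ s ∈ S, 1 / (1 - δ s))⁻¹

/-!
Since `M₁/D + (M - M₁)/D = M/D`, it suffices that the coefficient
`K·C_K / ((K-1)·C_{{2,…,K}})` of the first term is `< 1`. With `a = 1/(1-δ₁)` and
`S' = ∑_{k ≥ 2} 1/(1-δ_k)` this reads `K·S' < (K-1)·(a + S')`, i.e. `S' < (K-1)·a`: each of the
`K-1` summands of `S'` is at most `a`, because `δ₁` is the largest erasure probability, and one
of them is strictly smaller because the `δ_k` are not all equal.
-/

lemma Finset.sum_lt_card_nsmul_of_le_of_exists_lt {ι M : Type*} [AddCommMonoid M]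
    [PartialOrder M] [IsOrderedCancelAddMonoid M] {s : Finset ι} {f : ι → M} {c : M}
    (hle : ∀ i ∈ s, f i ≤ c) (hlt : ∃ i ∈ s, f i < c) : ∑ i ∈ s, f i < #s • c :=
  (sum_const (s := s) c) ▸ sum_lt_sum hle hlt

lemma erasureCap_pos {K : ℕ} {δ : Fin K → ℝ} {S : Finset (Fin K)} (hS : S.Nonempty)
    (hδ : ∀ s ∈ S, δ s < 1) : 0 < erasureCap δ S :=
  inv_pos.2 <| sum_pos (fun s hs => one_div_pos.2 (sub_pos.2 (hδ s hs))) hS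

lemma card_mul_erasureCap_lt {K : ℕ} {δ : Fin K → ℝ} {i : Fin K}
    (hmax : ∀ k, δ k ≤ δ i) (hi : δ i < 1) (hlt : ∃ k, δ k < δ i) :
    (K : ℝ) * erasureCap δ univ < ((K : ℝ) - 1) * erasureCap δ (univ.erase i) := by
  obtain ⟨j, hj⟩ := hlt
  have hδ : ∀ k, δ k < 1 := fun k => (hmax k).trans_lt hi
  have hji : j ∈ univ.erase i := mem_erase.2 ⟨ne_of_apply_ne δ hj.ne, mem_univ j⟩
  set a := 1 / (1 - δ i)
  set S' := ∑ k ∈ univ.erase i, 1 / (1 - δ k)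
  have hsplit : ∑ k, 1 / (1 - δ k) = a + S' := (add_sum_erase _ _ (mem_univ i)).symm
  have hS' : S' < ((K : ℝ) - 1) * a := by
    have hcard : (#(univ.erase i) : ℝ) = K - 1 := by
      rw [cast_card_erase_of_mem (mem_univ i), card_univ, Fintype.card_fin]
    rw [← hcard, ← nsmul_eq_mul]
    refine sum_lt_card_nsmul_of_le_of_exists_lt (fun k _ => ?_) ⟨j, hji, ?_⟩
    · exact one_div_le_one_div_of_le (sub_pos.2 hi) (by linarith [hmax k])
    · exact one_div_lt_one_div_of_lt (sub_pos.2 hi) (by linarith)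
  have ha : 0 < a := one_div_pos.2 (sub_pos.2 hi)
  have hS'pos : 0 < S' := sum_pos (fun k _ => one_div_pos.2 (sub_pos.2 (hδ k))) ⟨j, hji⟩
  simp only [erasureCap, hsplit, ← div_eq_mul_inv]
  rw [div_lt_div_iff₀ (by positivity) hS'pos]
  linarith

/-- On an erasure BC whose erasure probabilities are not all equal, if `M > M₁ ≥ 0` then the
upper bound of Proposition 7 is strictly below the perfect-global-gain line `C_K + M/D`:
`min{ C_K + M₁/D + ((M-M₁)/D)·K·C_K/((K-1)·C_{{2,…,K}}), C₁ + M₁/D } < C_K + M/D`. -/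
theorem uniform_assignment_suboptimal {K D : ℕ} (hK : 2 ≤ K) (hD : 1 ≤ D)
    (δ : Fin K → ℝ) (hδ1 : δ ⟨0, by omega⟩ < 1)
    (hmono : ∀ i j : Fin K, i ≤ j → δ j ≤ δ i)
    (hne : ∃ k l : Fin K, δ k ≠ δ l)
    (M M₁ : ℝ) (hM : M₁ < M) :
    min
      (erasureCap δ univ + M₁ / D +
        ((M - M₁) / D) * ((K : ℝ) * erasureCap δ univ /
          (((K : ℝ) - 1) * erasureCap δ (univ.erase ⟨0, by omega⟩))))
      ((1 - δ ⟨0, by omega⟩) + M₁ / D) <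
      erasureCap δ univ + M / D := by
  set i : Fin K := ⟨0, by omega⟩
  have hmax : ∀ k, δ k ≤ δ i := fun k => hmono i k (Nat.zero_le k)
  have hlt : ∃ k, δ k < δ i := by
    obtain ⟨k, l, hkl⟩ := hne
    by_contra! h
    exact hkl ((le_antisymm (hmax k) (h k)).trans (le_antisymm (hmax l) (h l)).symm)
  have hC' : 0 < erasureCap δ (univ.erase i) := by
    obtain ⟨j, hj⟩ := hlt
    exact erasureCap_pos ⟨j, mem_erase.2 ⟨ne_of_apply_ne δ hj.ne, mem_univ j⟩⟩
      fun k _ => (hmax k).trans_lt hδ1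
  have hK1 : (0 : ℝ) < K - 1 := by
    have : (2 : ℝ) ≤ K := by exact_mod_cast hK
    linarith
  have hratio : (K : ℝ) * erasureCap δ univ / ((K - 1) * erasureCap δ (univ.erase i)) < 1 :=
    (div_lt_one (mul_pos hK1 hC')).2 (card_mul_erasureCap_lt hmax hδ1 hlt)
  have hgain : 0 < (M - M₁) / D := div_pos (sub_pos.2 hM) (by exact_mod_cast hD)
  calc _ ≤ _ := min_le_left _ _
    _ < erasureCap δ univ + M₁ / D + (M - M₁) / D * 1 := by gcongr
    _ = erasureCap δ univ + M / D := by ring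
end
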